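/- Let Ψ be an instance of {1,2}-CSP whose constraint graph G is connected and bipartite, and assume P_∞ ⊨ Ψ. Then P_3 ⊨ Ψ if and only if all ∃^{≥2} vertices of G lie in the same part of the bipartition of G (i.e. all have the same colour in a proper 2-colouring of G). -/
import Mathlib


namespace CountingCSP

/-! ## The basic framework

An instance `Ψ` of `{1,2}`-CSP is modelled by a number `m` of variables, the variable set
being `Fin m` with its natural linear order `<` (the order of quantification `≺`), a function
`β : Fin m → ℕ` taking values in `{1,2}` (variable `v` is quantified by `∃^{≥ β v}`), and a
simple graph `G` on `Fin m` (the constraint graph).  A target graph is a type `B` together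
with an adjacency relation `E : B → B → Prop` (loops allowed in general). -/

/-- Adjacency of the finite path `P_n` on the vertices `{1,…,n}`, modelled as `Fin n`. -/
def pathAdj (n : ℕ) (i j : Fin n) : Prop :=
  (i : ℕ) + 1 = j ∨ (j : ℕ) + 1 = i

/-- Adjacency of the infinite path `P_∞` on `ℤ`: `i` and `j` adjacent iff `|i - j| = 1`. -/
def intPathAdj (i j : ℤ) : Prop := |i - j| = 1

/-- `SatFrom β G E i f` : processing the variables of the instance in `≺`-increasing order
starting from variable `i`, where the earlier variables have been assigned according to `f`,
the instance can be satisfied.  At each variable `v` one asks for a set `S` of `β v` distinct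
elements of the target such that for every `b ∈ S` the rest of the instance can be satisfied
with `v ↦ b`; when all variables are assigned, the assignment must be a homomorphism. -/
def SatFrom {m : ℕ} {B : Type*} (β : Fin m → ℕ) (G : SimpleGraph (Fin m))
    (E : B → B → Prop) (i : ℕ) (f : Fin m → B) : Prop :=
  if h : i < m then
    ∃ S : Finset B, S.card = β ⟨i, h⟩ ∧
      ∀ b ∈ S, SatFrom β G E (i + 1) (Function.update f ⟨i, h⟩ b)
  else ∀ u v : Fin m, G.Adj u v → E (f u) (f v)
termination_by m - i
decreasing_by omega

/-- `Sat β G E` : the instance with quantifiers `β` and constraint graph `G` is satisfied by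
the target graph with adjacency `E`  (i.e. `H ⊨ Ψ`).  The initial assignment is irrelevant
since every variable is assigned before it is used. -/
def Sat {m : ℕ} {B : Type*} (β : Fin m → ℕ) (G : SimpleGraph (Fin m))
    (E : B → B → Prop) : Prop :=
  ∀ f : Fin m → B, SatFrom β G E 0 f

/-- A graph is bipartite iff it has a proper 2-colouring. -/
def Bipartite {V : Type*} (G : SimpleGraph V) : Prop :=
  ∃ c : V → Bool, ∀ u v, G.Adj u v → c u ≠ c v

/-! ## Walks, looping walks, and the distance function δ -/

/-- `λ(Q) = |Q| − 2·∑_{interior vertices x of Q} (β x − 1)`, where `|Q|` is the length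
(number of edges) of the walk `Q = x₁,…,x_r`, and the interior vertices are `x₂,…,x_{r−1}`. -/
def lamWalk {m : ℕ} (β : Fin m → ℕ) (Q : List (Fin m)) : ℤ :=
  ((Q.length : ℤ) - 1) - 2 * (((Q.drop 1).dropLast).map (fun x => (β x : ℤ) - 1)).sum

/-- Looping walks of `G` (with respect to the quantification order `<` on `Fin m`):
a walk `x₁,…,x_r` with `x₁ ≠ x_r` such that if `r ≥ 3` then both endpoints strictly precede
every interior vertex and the walk splits at some interior position into two looping walks. -/
inductive IsLoopingWalk {m : ℕ} (G : SimpleGraph (Fin m)) : List (Fin m) → Prop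
  | base {x y : Fin m} : G.Adj x y → IsLoopingWalk G [x, y]
  | comb {x y z : Fin m} {Q₁ Q₂ : List (Fin m)} :
      IsLoopingWalk G (x :: (Q₁ ++ [y])) →
      IsLoopingWalk G (y :: (Q₂ ++ [z])) →
      x ≠ z →
      (∀ w ∈ Q₁ ++ y :: Q₂, x < w ∧ z < w) →
      IsLoopingWalk G (x :: (Q₁ ++ y :: Q₂ ++ [z]))

/-- `Q` is a looping walk between `u` and `v` (in either direction). -/
def LoopingWalkBetween {m : ℕ} (G : SimpleGraph (Fin m)) (u v : Fin m)
    (Q : List (Fin m)) : Prop :=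
  IsLoopingWalk G Q ∧
    ((Q.head? = some u ∧ Q.getLast? = some v) ∨ (Q.head? = some v ∧ Q.getLast? = some u))

/-- `IsDelta G β u v d` : `d = δ(u,v)`, i.e. `d` is the minimum of `λ(Q)` over all looping
walks `Q` of `G` between `u` and `v`.  (`δ(u,v) < ∞` corresponds to `∃ d, IsDelta G β u v d`.) -/
def IsDelta {m : ℕ} (G : SimpleGraph (Fin m)) (β : Fin m → ℕ) (u v : Fin m) (d : ℤ) : Prop :=
  (∃ Q, LoopingWalkBetween G u v Q ∧ lamWalk β Q = d) ∧
    ∀ Q, LoopingWalkBetween G u v Q → d ≤ lamWalk β Q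

/-! ## The functions γ and γ′ -/

/-- `IsGammaVal G β g v t` : `t = max(0, max_{u ≺ v, δ(u,v) < ∞} (g u − δ(u,v) + β v − 1))`. -/
def IsGammaVal {m : ℕ} (G : SimpleGraph (Fin m)) (β : Fin m → ℕ) (g : Fin m → ℤ)
    (v : Fin m) (t : ℤ) : Prop :=
  0 ≤ t ∧
  (∀ u, u < v → ∀ d, IsDelta G β u v d → g u - d + (β v : ℤ) - 1 ≤ t) ∧
  (t = 0 ∨ ∃ u, u < v ∧ ∃ d, IsDelta G β u v d ∧ t = g u - d + (β v : ℤ) - 1)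

/-- `g` is the function `γ`: `γ(v) = 0` for the `≺`-least vertex, and otherwise
`γ(v) = β(v) − 1 + max(0, max_{u ≺ v, δ(u,v) < ∞} (γ(u) − δ(u,v) + β(v) − 1))`. -/
def IsGamma {m : ℕ} (G : SimpleGraph (Fin m)) (β : Fin m → ℕ) (g : Fin m → ℤ) : Prop :=
  ∀ v : Fin m,
    if (v : ℕ) = 0 then g v = 0
    else ∃ t, IsGammaVal G β g v t ∧ g v = (β v : ℤ) - 1 + t

/-- `g` is the function `γ′`:
`γ′(v) = β(v) − 1 + max(0, max_{u ≺ v, δ(u,v) < ∞} (γ′(u) − δ(u,v) + β(v) − 1))`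
(so `γ′(v) = β(v) − 1` for the `≺`-least vertex). -/
def IsGamma' {m : ℕ} (G : SimpleGraph (Fin m)) (β : Fin m → ℕ) (g : Fin m → ℤ) : Prop :=
  ∀ v : Fin m, ∃ t, IsGammaVal G β g v t ∧ g v = (β v : ℤ) - 1 + t

/-! ## The closure sets (F, R⁺, R⁻) for the {2}-CSP(K₄) algorithm -/

mutual
/-- Membership in the closure set `F` of pairs (initialised as the edge set of `G`). -/
inductive InF {m : ℕ} (G : SimpleGraph (Fin m)) : Finset (Fin m) → Prop
  | edge {x y : Fin m} : G.Adj x y → InF G {x, y}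
  | x3a {x y w z : Fin m} : [x, y, w, z].Pairwise (· ≠ ·) →
      x < z → y < z → w < z → ¬(x < w ∧ y < w) →
      InF G {w, z} → InRp G {x, y, z} → InF G {x, w}
  | x3b {x y w z : Fin m} : [x, y, w, z].Pairwise (· ≠ ·) →
      x < z → y < z → w < z → ¬(x < w ∧ y < w) →
      InF G {w, z} → InRp G {x, y, z} → InF G {y, w}
  | x4 {x y w z : Fin m} : [x, y, w, z].Pairwise (· ≠ ·) →
      x < y → w < y → y < z →
      InRp G {x, y, z} → InRm G {w, y, z} → InF G {x, w}
  | x7a {x y q w z : Fin m} : [x, y, q, w, z].Pairwise (· ≠ ·) →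
      x < q → y < q → w < q → q < z → ¬(x < w ∧ y < w) →
      InRp G {x, y, z} → InRm G {w, q, z} → InF G {x, w}
  | x7a' {x y q w z : Fin m} : [x, y, q, w, z].Pairwise (· ≠ ·) →
      x < q → y < q → w < q → q < z → ¬(x < w ∧ y < w) →
      InRm G {x, y, z} → InRp G {w, q, z} → InF G {x, w}
  | x7b {x y q w z : Fin m} : [x, y, q, w, z].Pairwise (· ≠ ·) →
      x < q → y < q → w < q → q < z → ¬(x < w ∧ y < w) →
      InRp G {x, y, z} → InRm G {w, q, z} → InF G {y, w}
  | x7b' {x y q w z : Fin m} : [x, y, q, w, z].Pairwise (· ≠ ·) →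
      x < q → y < q → w < q → q < z → ¬(x < w ∧ y < w) →
      InRm G {x, y, z} → InRp G {w, q, z} → InF G {y, w}

/-- Membership in the closure set `R⁺` of triples. -/
inductive InRp {m : ℕ} (G : SimpleGraph (Fin m)) : Finset (Fin m) → Prop
  | x2 {x y w z : Fin m} : [x, y, w, z].Pairwise (· ≠ ·) →
      x < z → y < z → w < z →
      InF G {w, z} → InRm G {x, y, z} → InRp G {x, y, w}
  | x4 {x y w z : Fin m} : [x, y, w, z].Pairwise (· ≠ ·) →
      x < y → w < y → y < z →
      InRp G {x, y, z} → InRm G {w, y, z} → InRp G {x, y, w}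
  | x5p {x y w z : Fin m} : [x, y, w, z].Pairwise (· ≠ ·) →
      x < z → y < z → w < z →
      InRp G {x, y, z} → InRp G {w, y, z} → InRp G {x, y, w}
  | x5m {x y w z : Fin m} : [x, y, w, z].Pairwise (· ≠ ·) →
      x < z → y < z → w < z →
      InRm G {x, y, z} → InRm G {w, y, z} → InRp G {x, y, w}
  | x6ap {x y q w z : Fin m} : [x, y, q, w, z].Pairwise (· ≠ ·) →
      x < q → y < q → w < q → q < z →
      InRp G {x, y, z} → InRp G {w, q, z} → InRp G {x, y, w}
  | x6am {x y q w z : Fin m} : [x, y, q, w, z].Pairwise (· ≠ ·) →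
      x < q → y < q → w < q → q < z →
      InRm G {x, y, z} → InRm G {w, q, z} → InRp G {x, y, w}
  | x6bp {x y q w z : Fin m} : [x, y, q, w, z].Pairwise (· ≠ ·) →
      x < q → y < q → w < q → q < z →
      InRp G {x, y, z} → InRp G {w, q, z} → InRp G {x, y, q}
  | x6bm {x y q w z : Fin m} : [x, y, q, w, z].Pairwise (· ≠ ·) →
      x < q → y < q → w < q → q < z →
      InRm G {x, y, z} → InRm G {w, q, z} → InRp G {x, y, q}

/-- Membership in the closure set `R⁻` of triples. -/
inductive InRm {m : ℕ} (G : SimpleGraph (Fin m)) : Finset (Fin m) → Prop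
  | x1 {x y z : Fin m} : [x, y, z].Pairwise (· ≠ ·) →
      x < z → y < z →
      InF G {x, z} → InF G {y, z} → InRm G {x, y, z}
  | x3 {x y w z : Fin m} : [x, y, w, z].Pairwise (· ≠ ·) →
      x < z → y < z → w < z → x < w → y < w →
      InF G {w, z} → InRp G {x, y, z} → InRm G {x, y, w}
  | x7a {x y q w z : Fin m} : [x, y, q, w, z].Pairwise (· ≠ ·) →
      x < q → y < q → w < q → q < z →
      InRp G {x, y, z} → InRm G {w, q, z} → InRm G {x, y, q}
  | x7a' {x y q w z : Fin m} : [x, y, q, w, z].Pairwise (· ≠ ·) →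
      x < q → y < q → w < q → q < z →
      InRm G {x, y, z} → InRp G {w, q, z} → InRm G {x, y, q}
  | x7b {x y q w z : Fin m} : [x, y, q, w, z].Pairwise (· ≠ ·) →
      x < q → y < q → w < q → q < z → x < w → y < w →
      InRp G {x, y, z} → InRm G {w, q, z} → InRm G {x, y, w}
  | x7b' {x y q w z : Fin m} : [x, y, q, w, z].Pairwise (· ≠ ·) →
      x < q → y < q → w < q → q < z → x < w → y < w →
      InRm G {x, y, z} → InRp G {w, q, z} → InRm G {x, y, w}
end


section Aux

variable {m : ℕ}

/-- Every partial strategy extends to a full homomorphism agreeing below `i`. -/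
lemma satFrom_hom {B : Type*} (β : Fin m → ℕ) (hβ : ∀ v, 1 ≤ β v)
    (G : SimpleGraph (Fin m)) (E : B → B → Prop) (i : ℕ) (f : Fin m → B)
    (hsat : SatFrom β G E i f) :
    ∃ g : Fin m → B, (∀ u : Fin m, (u : ℕ) < i → g u = f u) ∧
      ∀ a b : Fin m, G.Adj a b → E (g a) (g b) := by
  by_cases h : i < m
  · rw [SatFrom, dif_pos h] at hsat
    obtain ⟨S, hcard, hS⟩ := hsat
    obtain ⟨b, hb⟩ : S.Nonempty := Finset.card_pos.mp (by rw [hcard]; exact hβ _)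
    obtain ⟨g, hg1, hg2⟩ := satFrom_hom β hβ G E (i + 1) _ (hS b hb)
    refine ⟨g, fun u hu => ?_, hg2⟩
    rw [hg1 u (by omega), Function.update_of_ne (by simp [Fin.ext_iff]; omega)]
  · rw [SatFrom, dif_neg h] at hsat
    exact ⟨f, fun u _ => rfl, hsat⟩
termination_by m - i
decreasing_by omega

/-- The game can be advanced from position `i` to position `j`. -/
lemma satFrom_reach {B : Type*} (β : Fin m → ℕ) (hβ : ∀ v, 1 ≤ β v)
    (G : SimpleGraph (Fin m)) (E : B → B → Prop) (i : ℕ) (f : Fin m → B)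
    (hsat : SatFrom β G E i f) (j : ℕ) (hij : i ≤ j) :
    ∃ f' : Fin m → B, (∀ u : Fin m, (u : ℕ) < i → f' u = f u) ∧ SatFrom β G E j f' := by
  by_cases hij' : i = j
  · exact ⟨f, fun _ _ => rfl, hij' ▸ hsat⟩
  · by_cases h : i < m
    · rw [SatFrom, dif_pos h] at hsat
      obtain ⟨S, hcard, hS⟩ := hsat
      obtain ⟨b, hb⟩ : S.Nonempty := Finset.card_pos.mp (by rw [hcard]; exact hβ _)
      obtain ⟨f', hf1, hf2⟩ := satFrom_reach β hβ G E (i + 1) _ (hS b hb) j (by omega)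
      refine ⟨f', fun u hu => ?_, hf2⟩
      rw [hf1 u (by omega), Function.update_of_ne (by simp [Fin.ext_iff]; omega)]
    · refine ⟨f, fun _ _ => rfl, ?_⟩
      rw [SatFrom, dif_neg h] at hsat
      rw [SatFrom, dif_neg (by omega)]
      exact hsat
termination_by j - i
decreasing_by omega

/-- Parity of a homomorphism to `P₃` along the bipartition. -/
lemma hom_parity (G : SimpleGraph (Fin m)) (c : Fin m → Bool)
    (hc : ∀ u v, G.Adj u v → c u ≠ c v) (g : Fin m → Fin 3)
    (hg : ∀ a b : Fin m, G.Adj a b → pathAdj 3 (g a) (g b))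
    {a b : Fin m} (hr : G.Reachable a b) :
    (c a = c b) ↔ ((g a : ℕ) % 2 = (g b : ℕ) % 2) := by
  obtain ⟨w⟩ := hr
  induction w with
  | nil => simp
  | @cons a x b h p ih =>
    have h1 := hc _ _ h
    have h2 : ((g a : ℕ)) + 1 = (g x : ℕ) ∨ ((g x : ℕ)) + 1 = (g a : ℕ) := hg _ _ h
    have h3 : (g a : ℕ) % 2 ≠ (g x : ℕ) % 2 := by omega
    cases hca : c a <;> cases hcx : c x <;> cases hcb : c b <;> simp_all <;> omega

lemma forward_aux (β : Fin m → ℕ) (hβ : ∀ v, 1 ≤ β v)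
    (G : SimpleGraph (Fin m)) (hconn : G.Connected)
    (c : Fin m → Bool) (hc : ∀ u v, G.Adj u v → c u ≠ c v)
    (u v : Fin m) (huv : u < v) (hu : β u = 2) (hv : β v = 2)
    (hne : c u ≠ c v) (hsat : Sat β G (pathAdj 3)) : False := by
  have h0 := hsat (fun _ => 0)
  obtain ⟨f1, -, h1⟩ := satFrom_reach β hβ G _ 0 _ h0 (u : ℕ) (by omega)
  rw [SatFrom, dif_pos u.isLt] at h1
  simp only [Fin.eta] at h1
  obtain ⟨S, hScard, hS⟩ := h1
  rw [hu] at hScard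
  have hS2 : 1 < S.card := by omega
  obtain ⟨b1, hb1, b2, hb2, hbne⟩ := Finset.one_lt_card.mp hS2
  obtain ⟨b, hbS, hbne1⟩ : ∃ b ∈ S, b ≠ 1 := by
    by_cases h : b1 = 1
    · exact ⟨b2, hb2, by rintro rfl; exact hbne h⟩
    · exact ⟨b1, hb1, h⟩
  have h2 := hS b hbS
  obtain ⟨f3, hagree, h3⟩ := satFrom_reach β hβ G _ ((u : ℕ) + 1) _ h2 (v : ℕ) (by omega)
  rw [SatFrom, dif_pos v.isLt] at h3
  simp only [Fin.eta] at h3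
  obtain ⟨S', hS'card, hS'⟩ := h3
  rw [hv] at hS'card
  have key : ∀ b' ∈ S', b' = 1 := by
    intro b' hb'
    obtain ⟨g, hg1, hg2⟩ := satFrom_hom β hβ G _ ((v : ℕ) + 1) _ (hS' b' hb')
    have hgv : g v = b' := by
      rw [hg1 v (by omega)]; simp
    have hgu : g u = b := by
      rw [hg1 u (by omega), Function.update_of_ne (by simp [Fin.ext_iff]; omega),
        hagree u (by omega)]
      simp
    have hpar := hom_parity G c hc g hg2 (hconn.preconnected u v)
    have hne2 : (g u : ℕ) % 2 ≠ (g v : ℕ) % 2 := fun h => hne (hpar.mpr h)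
    rw [hgu, hgv] at hne2
    have hb3 : (b : ℕ) < 3 := b.isLt
    have hb'3 : (b' : ℕ) < 3 := b'.isLt
    have : (b : ℕ) ≠ 1 := fun h => hbne1 (Fin.ext h)
    exact Fin.ext (by omega)
  have hS'2 : 1 < S'.card := by omega
  obtain ⟨c1, hc1, c2, hc2, hcne⟩ := Finset.one_lt_card.mp hS'2
  exact hcne (by rw [key c1 hc1, key c2 hc2])

lemma backward_aux (β : Fin m → ℕ) (hβ : ∀ v, β v = 1 ∨ β v = 2)
    (G : SimpleGraph (Fin m)) (t : Bool) (c : Fin m → Bool)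
    (hc : ∀ u v, G.Adj u v → c u ≠ c v)
    (ht : ∀ v, β v = 2 → c v = t) (i : ℕ) (f : Fin m → Fin 3)
    (hf : ∀ u : Fin m, (u : ℕ) < i → (if c u = t then f u = 0 ∨ f u = 2 else f u = 1)) :
    SatFrom β G (pathAdj 3) i f := by
  by_cases h : i < m
  · rw [SatFrom, dif_pos h]
    by_cases hcv : c ⟨i, h⟩ = t
    · refine ⟨if β ⟨i, h⟩ = 1 then {0} else {(0 : Fin 3), 2}, ?_, ?_⟩
      · rcases hβ ⟨i, h⟩ with h1 | h1 <;> rw [h1] <;> simp [h1]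
      · intro b hb
        have hb02 : b = 0 ∨ b = 2 := by
          rcases hβ ⟨i, h⟩ with h1 | h1 <;> rw [h1] at hb <;> simp at hb
          · exact Or.inl hb
          · exact hb
        apply backward_aux β hβ G t c hc ht (i + 1)
        intro w hw
        by_cases hwv : w = ⟨i, h⟩
        · subst hwv
          rw [Function.update_self, if_pos hcv]
          exact hb02
        · rw [Function.update_of_ne hwv]
          exact hf w (by have : (w : ℕ) ≠ i := fun hh => hwv (Fin.ext hh); omega)
    · have hb1 : β ⟨i, h⟩ = 1 := by
        rcases hβ ⟨i, h⟩ with h1 | h1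
        · exact h1
        · exact absurd (ht _ h1) hcv
      refine ⟨{1}, by simp [hb1], ?_⟩
      intro b hb
      simp only [Finset.mem_singleton] at hb
      subst hb
      apply backward_aux β hβ G t c hc ht (i + 1)
      intro w hw
      by_cases hwv : w = ⟨i, h⟩
      · subst hwv
        rw [Function.update_self, if_neg hcv]
      · rw [Function.update_of_ne hwv]
        exact hf w (by have : (w : ℕ) ≠ i := fun hh => hwv (Fin.ext hh); omega)
  · rw [SatFrom, dif_neg h]
    intro a b hab
    have ha := hf a (by omega)
    have hb := hf b (by omega)
    have hcab := hc a b hab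
    unfold pathAdj
    by_cases h1 : c a = t
    · rw [if_pos h1] at ha
      rw [if_neg (by rw [← h1]; exact fun hh => hcab hh.symm)] at hb
      rcases ha with ha | ha <;> rw [ha, hb] <;> simp
    · rw [if_neg h1] at ha
      rw [if_pos (by cases hca : c a <;> cases hcb : c b <;> simp_all)] at hb
      rcases hb with hb | hb <;> rw [ha, hb] <;> simp
termination_by m - i
decreasing_by all_goals omega

end Aux

/-- Let `Ψ` have connected bipartite constraint graph `G` (with proper
2-colouring `c`) and `P_∞ ⊨ Ψ`.  Then `P_3 ⊨ Ψ` iff all `∃^{≥2}` vertices have the same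
colour. -/
theorem p3_sat_iff {m : ℕ} (β : Fin m → ℕ) (hβ : ∀ v, β v = 1 ∨ β v = 2)
    (G : SimpleGraph (Fin m)) (hconn : G.Connected)
    (c : Fin m → Bool) (hc : ∀ u v, G.Adj u v → c u ≠ c v)
    (hinf : Sat β G intPathAdj) :
    Sat β G (pathAdj 3) ↔ ∀ u v : Fin m, β u = 2 → β v = 2 → c u = c v := by
  have hβ' : ∀ v, 1 ≤ β v := fun v => by rcases hβ v with h | h <;> omega
  constructor
  · intro hsat u v hu hv
    by_contra hne
    rcases lt_trichotomy u v with h | h | h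
    · exact forward_aux β hβ' G hconn c hc u v h hu hv hne hsat
    · exact hne (h ▸ rfl)
    · exact forward_aux β hβ' G hconn c hc v u h hv hu (Ne.symm hne) hsat
  · intro hsame f
    by_cases hex : ∃ w, β w = 2
    · obtain ⟨w, hw⟩ := hex
      exact backward_aux β hβ G (c w) c hc (fun v hv => hsame v w hv hw) 0 f
        (fun u hu => absurd hu (by omega))
    · exact backward_aux β hβ G true c hc (fun v hv => absurd ⟨v, hv⟩ hex) 0 f
        (fun u hu => absurd hu (by omega))

end CountingCSP
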